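/- arXiv:0812.1627 — 3 statements merged into one kernel-verified Lean document; each statement's English description precedes it below -/
import Mathlib

section
/- Let α ∈ ℝ and let v_-, v_+ be periodic stationary solutions with constant α such that v_-(x) < v_+(x) for all x ∈ ℝ. Let u₀ ∈ ℝ with v_-(0) < u₀ < v_+(0), and let u be the maximal solution of the differential equation u'(x) = A(x,u(x)) − α with u(0) = u₀. Then u is defined on all of ℝ, and v_-(x) ≤ u(x) ≤ v_+(x) for all x ∈ ℝ. -/
/-!
Truncating the field `A x v - α` in `v` outside a strip `[m, M]` containing both periodic
solutions `vm`, `vp` gives, by periodicity in `x` and compactness, a field that is globally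
Lipschitz and bounded, so Picard–Lindelöf on ever longer intervals yields a global solution `u`
through `(0, u₀)`. Solutions of the truncated equation are unique, so by the intermediate value
theorem none of them can cross another; since `vm` and `vp` lie in the strip they solve the
truncated equation too, which traps `u` strictly between them, inside the strip where the
truncation does nothing. Any other global solution coincides with `u` because the field is `C¹`.
-/

open MeasureTheory Filter Set Topology

/-- A periodic stationary solution of the viscous conservation law, with
constant `α`. -/
def PerStat (A : ℝ → ℝ → ℝ) (α : ℝ) (v : ℝ → ℝ) : Prop :=
  ContDiff ℝ 1 v ∧ (∀ x, v (x + 1) = v x) ∧ ∀ x, deriv v x = A x (v x) - α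

open Function NNReal

section Topology

variable {α : Type*} [TopologicalSpace α] [PreconnectedSpace α]

theorem forall_lt_of_forall_ne_of_continuous {f g : α → ℝ} (hf : Continuous f)
    (hg : Continuous g) (hne : ∀ x, f x ≠ g x) {x₀ : α} (h₀ : f x₀ < g x₀) :
    ∀ x, f x < g x := by
  have hclopen : IsClopen {x | f x < g x} := by
    have hle : {x | f x < g x} = {x | f x ≤ g x} := by
      ext x
      exact (hne x).le_iff_lt.symm
    exact ⟨hle ▸ isClosed_le hf hg, isOpen_lt hf hg⟩
  exact eq_univ_iff_forall.1 (hclopen.eq_univ ⟨x₀, h₀⟩)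

end Topology

section ODE

variable {E : Type*} [NormedAddCommGroup E] [NormedSpace ℝ E]

theorem exists_forall_mem_Ioo_hasDerivAt_of_lipschitzWith [CompleteSpace E] {F : ℝ → E → E}
    {K L : ℝ≥0} (hcont : ∀ x, Continuous (F · x)) (hlip : ∀ t, LipschitzWith K (F t))
    (hbd : ∀ t x, ‖F t x‖ ≤ L) (t₀ : ℝ) (x₀ : E) (r : ℝ≥0) :
    ∃ f : ℝ → E, f t₀ = x₀ ∧ ∀ t ∈ Ioo (t₀ - r) (t₀ + r), HasDerivAt f (F t (f t)) t := by
  have hpl : IsPicardLindelof F (tmin := t₀ - r) (tmax := t₀ + r)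
      ⟨t₀, by simp⟩ x₀ (L * r) 0 L K :=
    { lipschitzOnWith := fun t _ => (hlip t).lipschitzOnWith
      continuousOn := fun x _ => (hcont x).continuousOn
      norm_le := fun t _ x _ => hbd t x
      mul_max_le := by simp }
  obtain ⟨f, hf₀, hf⟩ := hpl.exists_eq_forall_mem_Icc_hasDerivWithinAt₀
  exact ⟨f, hf₀, fun t ht => (hf t (Ioo_subset_Icc_self ht)).hasDerivAt (Icc_mem_nhds ht.1 ht.2)⟩

theorem exists_forall_hasDerivAt_of_lipschitzWith [CompleteSpace E] {F : ℝ → E → E}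
    {K L : ℝ≥0} (hcont : ∀ x, Continuous (F · x)) (hlip : ∀ t, LipschitzWith K (F t))
    (hbd : ∀ t x, ‖F t x‖ ≤ L) (t₀ : ℝ) (x₀ : E) :
    ∃ f : ℝ → E, f t₀ = x₀ ∧ ∀ t, HasDerivAt f (F t (f t)) t := by
  choose sol hsol₀ hsol using fun n : ℕ =>
    exists_forall_mem_Ioo_hasDerivAt_of_lipschitzWith hcont hlip hbd t₀ x₀ n
  set I : ℕ → Set ℝ := fun n => Ioo (t₀ - n) (t₀ + n)
  have hsol' : ∀ n, ∀ t ∈ I n, HasDerivAt (sol n) (F t (sol n t)) t :=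
    fun n t ht => hsol n t (by simpa [I] using ht)
  have agree_of_le : ∀ m n, m ≤ n → EqOn (sol m) (sol n) (I m) := by
    intro m n hmn t ht
    have hsub : I m ⊆ I n := Ioo_subset_Ioo (by gcongr) (by gcongr)
    have ht₀ : t₀ ∈ I m := ⟨by linarith [ht.1, ht.2], by linarith [ht.1, ht.2]⟩
    exact ODE_solution_unique_of_mem_Ioo (s := fun _ => univ)
      (fun t _ => (hlip t).lipschitzOnWith) ht₀ (fun t ht => ⟨hsol' m t ht, mem_univ _⟩)
      (fun t ht => ⟨hsol' n t (hsub ht), mem_univ _⟩) ((hsol₀ m).trans (hsol₀ n).symm) ht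
  have agree : ∀ m n, ∀ t ∈ I m, t ∈ I n → sol m t = sol n t := by
    intro m n t hm hn
    rcases le_total m n with h | h
    · exact agree_of_le m n h hm
    · exact (agree_of_le n m h hn).symm
  set N : ℝ → ℕ := fun t => ⌈|t - t₀|⌉₊ + 1
  have mem_I : ∀ t, t ∈ I (N t) := by
    intro t
    have hceil := Nat.le_ceil |t - t₀|
    simp only [I, N, Nat.cast_add, Nat.cast_one, mem_Ioo]
    constructor <;> linarith [le_abs_self (t - t₀), neg_abs_le (t - t₀)]
  refine ⟨fun t => sol (N t) t, hsol₀ _, fun t => ?_⟩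
  have heq : (fun s => sol (N s) s) =ᶠ[𝓝 t] sol (N t) :=
    eventually_of_mem (isOpen_Ioo.mem_nhds (mem_I t)) fun s hs => agree _ _ s (mem_I s) hs
  exact (hsol' _ t (mem_I t)).congr_of_eventuallyEq heq |>.congr_deriv (by rw [heq.eq_of_nhds])

theorem ODE_solution_unique_of_eventually_of_contDiff {F : ℝ → E → E}
    (hF : ContDiff ℝ 1 (uncurry F)) {f g : ℝ → E} {t₀ : ℝ}
    (hf : ∀ᶠ t in 𝓝 t₀, HasDerivAt f (F t (f t)) t)
    (hg : ∀ᶠ t in 𝓝 t₀, HasDerivAt g (F t (g t)) t) (heq : f t₀ = g t₀) : f =ᶠ[𝓝 t₀] g := by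
  obtain ⟨K, U, hU, hlipU⟩ := (hF.contDiffAt (x := (t₀, f t₀))).exists_lipschitzOnWith
  have hlip : ∀ t, LipschitzOnWith K (F t) (Prod.mk t ⁻¹' U) := fun t => by
    have h := hlipU.comp (LipschitzWith.prodMk_left t).lipschitzOnWith (mapsTo_preimage _ _)
    rw [mul_one] at h
    exact h
  have eventually_mem : ∀ h : ℝ → E, ContinuousAt h t₀ → h t₀ = f t₀ →
      ∀ᶠ t in 𝓝 t₀, h t ∈ Prod.mk t ⁻¹' U := fun h hc hh => by
    have hmem : U ∈ 𝓝 (t₀, h t₀) := by rwa [hh]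
    exact (continuousAt_id.prodMk hc).preimage_mem_nhds hmem
  exact ODE_solution_unique_of_eventually (Eventually.of_forall hlip)
    (hf.and (eventually_mem f hf.self_of_nhds.continuousAt rfl))
    (hg.and (eventually_mem g hg.self_of_nhds.continuousAt heq.symm)) heq

theorem ODE_solution_unique_univ_of_contDiff {F : ℝ → E → E} (hF : ContDiff ℝ 1 (uncurry F))
    {f g : ℝ → E} {t₀ : ℝ} (hf : ∀ t, HasDerivAt f (F t (f t)) t)
    (hg : ∀ t, HasDerivAt g (F t (g t)) t) (heq : f t₀ = g t₀) : f = g := by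
  have hclopen : IsClopen {t | f t = g t} := by
    refine ⟨isClosed_eq (Differentiable.continuous fun t => (hf t).differentiableAt)
      (Differentiable.continuous fun t => (hg t).differentiableAt), ?_⟩
    refine isOpen_iff_mem_nhds.2 fun t ht => ?_
    exact ODE_solution_unique_of_eventually_of_contDiff hF (.of_forall hf) (.of_forall hg) ht
  exact funext (eq_univ_iff_forall.1 (hclopen.eq_univ ⟨t₀, heq⟩))

end ODE

namespace Function.Periodic

variable {E E' : Type*} [NormedAddCommGroup E] [NormedAddCommGroup E'] {F : ℝ → E → E'} {c : ℝ}
  {s : Set E}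

theorem exists_forall_lipschitzOnWith [NormedSpace ℝ E] [NormedSpace ℝ E'] (hper : Periodic F c)
    (hc : 0 < c) (hF : ContDiff ℝ 1 (uncurry F)) (hs : Convex ℝ s) (hs' : IsCompact s) :
    ∃ K, ∀ t, LipschitzOnWith K (F t) s := by
  obtain ⟨K, hK⟩ := hF.contDiffOn.exists_lipschitzOnWith one_ne_zero
    ((convex_Icc 0 c).prod hs) (isCompact_Icc.prod hs')
  refine ⟨K, fun t => ?_⟩
  obtain ⟨t', ht', hFt⟩ := hper.exists_mem_Ico₀ hc t
  rw [hFt]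
  have h := hK.comp (LipschitzWith.prodMk_left t').lipschitzOnWith
    fun x hx => ⟨Ico_subset_Icc_self ht', hx⟩
  rw [mul_one] at h
  exact h

theorem exists_forall_norm_le (hper : Periodic F c) (hc : 0 < c) (hF : Continuous (uncurry F))
    (hs : IsCompact s) : ∃ L : ℝ≥0, ∀ t, ∀ x ∈ s, ‖F t x‖ ≤ L := by
  obtain ⟨L, hL⟩ := ((isCompact_Icc (a := 0) (b := c)).prod hs).exists_bound_of_continuousOn
    hF.continuousOn
  refine ⟨L.toNNReal, fun t x hx => ?_⟩
  obtain ⟨t', ht', hFt⟩ := hper.exists_mem_Ico₀ hc t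
  rw [hFt]
  exact (hL (t', x) ⟨Ico_subset_Icc_self ht', hx⟩).trans (Real.le_coe_toNNReal L)

end Function.Periodic

theorem exists_forall_hasDerivAt_between {F : ℝ → ℝ → ℝ} {a b : ℝ} {K L : ℝ≥0}
    (hcont : ∀ x ∈ Icc a b, Continuous (F · x)) (hlip : ∀ t, LipschitzOnWith K (F t) (Icc a b))
    (hbd : ∀ t, ∀ x ∈ Icc a b, ‖F t x‖ ≤ L) {f g : ℝ → ℝ}
    (hf : ∀ t, HasDerivAt f (F t (f t)) t) (hg : ∀ t, HasDerivAt g (F t (g t)) t)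
    (hfab : ∀ t, f t ∈ Icc a b) (hgab : ∀ t, g t ∈ Icc a b) {t₀ x₀ : ℝ}
    (hfx₀ : f t₀ < x₀) (hgx₀ : x₀ < g t₀) :
    ∃ u : ℝ → ℝ, (∀ t, HasDerivAt u (F t (u t)) t) ∧ u t₀ = x₀ ∧
      ∀ t, f t < u t ∧ u t < g t := by
  have hab : a ≤ b := (hfab t₀).1.trans (hfab t₀).2
  set G : ℝ → ℝ → ℝ := fun t x => F t (projIcc a b hab x)
  have hGF : ∀ t, ∀ x ∈ Icc a b, G t x = F t x := fun t x hx => by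
    simp only [G, projIcc_of_mem hab hx]
  have hGlip : ∀ t, LipschitzWith K (G t) := fun t => by
    have h := (lipschitzOnWith_iff_restrict.1 (hlip t)).comp (LipschitzWith.projIcc hab)
    rw [mul_one] at h
    exact h
  obtain ⟨u, hu₀, hu⟩ := exists_forall_hasDerivAt_of_lipschitzWith
    (fun x => hcont _ (projIcc a b hab x).2) hGlip (fun t x => hbd t _ (projIcc a b hab x).2)
    t₀ x₀
  have solves_G : ∀ h : ℝ → ℝ, (∀ t, HasDerivAt h (F t (h t)) t) → (∀ t, h t ∈ Icc a b) →
      ∀ t, HasDerivAt h (G t (h t)) t := fun h hh hmem t => hGF t _ (hmem t) ▸ hh t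
  have ne_u : ∀ h : ℝ → ℝ, (∀ t, HasDerivAt h (G t (h t)) t) → h t₀ ≠ x₀ → ∀ t, h t ≠ u t := by
    intro h hh h₀ t ht
    have h_eq_u : h = u := ODE_solution_unique_univ (s := fun _ => univ)
      (fun t => (hGlip t).lipschitzOnWith) (fun t => ⟨hh t, mem_univ _⟩)
      (fun t => ⟨hu t, mem_univ _⟩) ht
    exact h₀ (h_eq_u ▸ hu₀)
  have hcont_u : Continuous u := Differentiable.continuous fun t => (hu t).differentiableAt
  have hfu := forall_lt_of_forall_ne_of_continuous
    (Differentiable.continuous fun t => (hf t).differentiableAt) hcont_u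
    (ne_u f (solves_G f hf hfab) hfx₀.ne) (hu₀ ▸ hfx₀)
  have hug := forall_lt_of_forall_ne_of_continuous hcont_u
    (Differentiable.continuous fun t => (hg t).differentiableAt)
    (fun t => (ne_u g (solves_G g hg hgab) hgx₀.ne' t).symm) (hu₀ ▸ hgx₀)
  refine ⟨u, fun t => ?_, hu₀, fun t => ⟨hfu t, hug t⟩⟩
  rw [← hGF t (u t) ⟨(hfab t).1.trans (hfu t).le, (hug t).le.trans (hgab t).2⟩]
  exact hu t

theorem shock_ode_global_and_bounded_general
    (A : ℝ → ℝ → ℝ)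
    (hA : ContDiff ℝ 1 (Function.uncurry A))
    (hper : ∀ y v, A (y + 1) v = A y v)
    (α : ℝ) (vm vp : ℝ → ℝ)
    (hvm : PerStat A α vm) (hvp : PerStat A α vp)
    (u₀ : ℝ) (h₀l : vm 0 < u₀) (h₀r : u₀ < vp 0) :
    (∃ u : ℝ → ℝ, (∀ x, HasDerivAt u (A x (u x) - α) x) ∧ u 0 = u₀) ∧
    (∀ u : ℝ → ℝ, (∀ x, HasDerivAt u (A x (u x) - α) x) → u 0 = u₀ →
      ∀ x, vm x ≤ u x ∧ u x ≤ vp x) := by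
  obtain ⟨hvm, hvm_per, hvm_deriv⟩ := hvm
  obtain ⟨hvp, hvp_per, hvp_deriv⟩ := hvp
  set F : ℝ → ℝ → ℝ := fun x v => A x v - α
  have hF : ContDiff ℝ 1 (uncurry F) := hA.sub contDiff_const
  have hF_per : Periodic F 1 := fun x => funext fun v => by simp only [F, hper]
  have hasDerivAt_of_perStat : ∀ v : ℝ → ℝ, ContDiff ℝ 1 v → (∀ x, deriv v x = F x (v x)) →
      ∀ x, HasDerivAt v (F x (v x)) x :=
    fun v hv hderiv x => hderiv x ▸ (hv.differentiable one_ne_zero x).hasDerivAt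
  have hrange : IsCompact (range vm ∪ range vp) :=
    (Periodic.compact_of_continuous hvm_per one_ne_zero hvm.continuous).union
      (Periodic.compact_of_continuous hvp_per one_ne_zero hvp.continuous)
  obtain ⟨m, hm⟩ := hrange.bddBelow
  obtain ⟨M, hM⟩ := hrange.bddAbove
  have mem_strip : ∀ y ∈ range vm ∪ range vp, y ∈ Icc m M := fun y hy => ⟨hm hy, hM hy⟩
  obtain ⟨K, hK⟩ := hF_per.exists_forall_lipschitzOnWith one_pos hF (convex_Icc m M) isCompact_Icc
  obtain ⟨L, hL⟩ := hF_per.exists_forall_norm_le one_pos hF.continuous isCompact_Icc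
  obtain ⟨u, hu, hu₀, hu_between⟩ := exists_forall_hasDerivAt_between
    (fun x _ => hF.continuous.comp (continuous_id.prodMk continuous_const)) hK hL
    (hasDerivAt_of_perStat vm hvm hvm_deriv) (hasDerivAt_of_perStat vp hvp hvp_deriv)
    (fun t => mem_strip _ (.inl (mem_range_self t)))
    (fun t => mem_strip _ (.inr (mem_range_self t))) h₀l h₀r
  refine ⟨⟨u, hu, hu₀⟩, fun w hw hw₀ x => ?_⟩
  obtain rfl : w = u := ODE_solution_unique_univ_of_contDiff hF hw hu (hw₀.trans hu₀.symm)
  exact ⟨(hu_between x).1.le, (hu_between x).2.le⟩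

/-- the maximal solution of `u' = A(x,u) - α`, `u(0) = u₀` with
`v₋(0) < u₀ < v₊(0)` is global, and stays between `v₋` and `v₊`.  This is
expressed by: there exists a global solution with this initial condition, and
every global solution with this initial condition satisfies the bounds. -/
theorem shock_ode_global_and_bounded
    (A : ℝ → ℝ → ℝ)
    (hA : ContDiff ℝ 1 (Function.uncurry A))
    (hper : ∀ y v, A (y + 1) v = A y v)
    (α : ℝ) (vm vp : ℝ → ℝ)
    (hvm : PerStat A α vm) (hvp : PerStat A α vp)
    (hlt : ∀ x, vm x < vp x)
    (u₀ : ℝ) (h₀l : vm 0 < u₀) (h₀r : u₀ < vp 0) :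
    (∃ u : ℝ → ℝ, (∀ x, HasDerivAt u (A x (u x) - α) x) ∧ u 0 = u₀) ∧
    (∀ u : ℝ → ℝ, (∀ x, HasDerivAt u (A x (u x) - α) x) → u 0 = u₀ →
      ∀ x, vm x ≤ u x ∧ u x ≤ vp x) :=
  shock_ode_global_and_bounded_general A hA hper α vm vp hvm hvp u₀ h₀l h₀r
end

section
/- Let α ∈ ℝ and let v_-, v_+ be periodic stationary solutions with constant α such that v_-(x) < v_+(x) for all x ∈ ℝ, and assume the Oleinik condition: every periodic stationary solution w with constant α satisfying v_-(x) ≤ w(x) ≤ v_+(x) for all x equals v_- identically or v_+ identically. Let u₀ ∈ ℝ with v_-(0) < u₀ < v_+(0), and let u : ℝ → ℝ be the global solution of u'(x) = A(x,u(x)) − α with u(0) = u₀. Then either (u(x) − v_-(x) → 0 as x → −∞ and u(x) − v_+(x) → 0 as x → +∞) or (u(x) − v_+(x) → 0 as x → −∞ and u(x) − v_-(x) → 0 as x → +∞). -/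
/-!
By uniqueness, `u` stays strictly between `v₋` and `v₊`, and comparing `u` with the solution
`u (· + 1)` shows that `u x < u (x + 1)` for all `x`, or the reverse, or that `u` is periodic; the
last case is excluded by the Oleinik condition. Hence the integer translates `u (· + k)` are
monotone in `k` and converge pointwise as `k → ±∞`. Passing to the limit in the integral form of
the equation, each limit is a periodic stationary solution between `v₋` and `v₊`, so it is `v₋`
or `v₊`, and the two limits differ. Grönwall's inequality on each cell `[k, k + 1]` turns the
convergence at the integers into `u - v → 0`.
-/

open MeasureTheory Filter Set Topology

open Function Real

def SolvesODE (F : ℝ → ℝ → ℝ) (u : ℝ → ℝ) : Prop :=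
  ∀ x, HasDerivAt u (F x (u x)) x

theorem exists_forall_norm_le_of_periodic {E : Type*} [NormedAddCommGroup E] {F : ℝ → ℝ → E}
    (hF : Continuous (uncurry F)) (hper : Periodic F 1) {K : Set ℝ} (hK : IsCompact K) :
    ∃ C, ∀ t, ∀ y ∈ K, ‖F t y‖ ≤ C := by
  obtain ⟨C, hC⟩ := (isCompact_Icc (a := 0) (b := 1)).prod hK |>.exists_bound_of_continuousOn
    hF.continuousOn
  refine ⟨C, fun t y hy => ?_⟩
  obtain ⟨s, hs, hst⟩ := hper.exists_mem_Ico₀ one_pos t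
  rw [hst]
  exact hC (s, y) ⟨Ico_subset_Icc_self hs, hy⟩

theorem exists_forall_lipschitzOnWith_of_periodic {F : ℝ → ℝ → ℝ}
    (hF : ContDiff ℝ 1 (uncurry F)) (hper : Periodic F 1) (c d : ℝ) :
    ∃ K, ∀ t, LipschitzOnWith K (F t) (Icc c d) := by
  set D : ℝ → ℝ → ℝ := fun t y => fderiv ℝ (uncurry F) (t, y) (0, 1)
  have hD : Continuous (uncurry D) :=
    (hF.continuous_fderiv one_ne_zero).clm_apply continuous_const
  have hFshift : (fun p => uncurry F (p + ((1 : ℝ), (0 : ℝ)))) = uncurry F :=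
    funext fun p => by simp [uncurry, hper p.1]
  have hDper : Periodic D 1 := fun t => funext fun y => by
    have h := fderiv_comp_add_right (𝕜 := ℝ) (f := uncurry F) (x := (t, y)) (1, (0 : ℝ))
    rw [hFshift] at h
    simp [D, h]
  have hderiv : ∀ t y, HasDerivAt (F t) (D t y) y := fun t y =>
    (hF.differentiable one_ne_zero (t, y)).hasFDerivAt.comp_hasDerivAt y
      ((hasDerivAt_const y t).prodMk (hasDerivAt_id y))
  obtain ⟨C, hC⟩ := exists_forall_norm_le_of_periodic hD hDper (isCompact_Icc (a := c) (b := d))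
  refine ⟨C.toNNReal, fun t => (convex_Icc c d).lipschitzOnWith_of_nnnorm_hasDerivWithin_le
    (fun y _ => (hderiv t y).hasDerivWithinAt) fun y hy => ?_⟩
  rw [← NNReal.coe_le_coe, coe_nnnorm]
  exact (hC t y hy).trans (le_coe_toNNReal C)

theorem Function.Periodic.add_int_eq {X : Type*} {f : ℝ → X} (h : Periodic f 1) (x : ℝ)
    (k : ℤ) : f (x + k) = f x := by
  simpa using h.int_mul k x

theorem periodic_of_tendsto_shift {X : Type*} [TopologicalSpace X] [T2Space X] {l : Filter ℤ}
    [l.NeBot] {u w : ℝ → X} (hl : Tendsto (· + 1) l l)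
    (hw : ∀ x, Tendsto (fun k : ℤ => u (x + k)) l (𝓝 (w x))) : Periodic w 1 := fun x =>
  tendsto_nhds_unique (hw (x + 1)) <| ((hw x).comp hl).congr fun k => by
    simp only [comp_apply, Int.cast_add, Int.cast_one]
    ring_nf

theorem solvesODE_of_sub_eq_integral {F : ℝ → ℝ → ℝ} {w : ℝ → ℝ} {C : ℝ}
    (hF : Continuous (uncurry F)) (hC : ∀ t, ‖F t (w t)‖ ≤ C)
    (h : ∀ a b, w b - w a = ∫ s in a..b, F s (w s)) : SolvesODE F w := by
  have hw : Continuous w := by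
    refine (LipschitzWith.of_dist_le_mul fun a b => ?_ : LipschitzWith C.toNNReal w).continuous
    rw [dist_eq_norm, h b a, dist_comm, dist_eq_norm']
    exact (intervalIntegral.norm_integral_le_of_norm_le_const fun t _ => hC t).trans
      (mul_le_mul_of_nonneg_right (le_coe_toNNReal C) (abs_nonneg _))
  have hg : Continuous fun s => F s (w s) := hF.comp (continuous_id.prodMk hw)
  intro x
  have hprim : HasDerivAt (fun b => w 0 + ∫ s in (0 : ℝ)..b, F s (w s)) (F x (w x)) x :=
    (intervalIntegral.integral_hasDerivAt_right (hg.intervalIntegrable 0 x)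
      (hg.stronglyMeasurableAtFilter volume (𝓝 x)) hg.continuousAt).const_add _
  have hw_eq : (fun b => w 0 + ∫ s in (0 : ℝ)..b, F s (w s)) = w :=
    funext fun b => by linarith [h 0 b]
  rwa [hw_eq] at hprim

namespace SolvesODE

variable {F : ℝ → ℝ → ℝ} {u v w : ℝ → ℝ}

theorem continuous (hu : SolvesODE F u) : Continuous u :=
  continuous_iff_continuousAt.2 fun x => (hu x).continuousAt

theorem continuous_field (hF : Continuous (uncurry F)) (hu : SolvesODE F u) :
    Continuous fun x => F x (u x) :=
  hF.comp (continuous_id.prodMk hu.continuous)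

theorem comp_add_int (hper : Periodic F 1) (hu : SolvesODE F u) (k : ℤ) :
    SolvesODE F fun x => u (x + k) := fun x => by
  simpa [hper.add_int_eq x k] using (hu (x + k)).comp_add_const x k

theorem eq_of_apply_eq (hF : ContDiff ℝ 1 (uncurry F)) (hu : SolvesODE F u)
    (hv : SolvesODE F v) {t₀ : ℝ} (h : u t₀ = v t₀) : u = v := by
  have hopen : IsOpen {t | u t = v t} := by
    refine isOpen_iff_mem_nhds.2 fun t (ht : u t = v t) => ?_
    obtain ⟨K, U, hU, hK⟩ := (hF.contDiffAt (x := (t, u t))).exists_lipschitzOnWith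
    obtain ⟨V, hV, W, hW, hVW⟩ := mem_nhds_prod_iff.1 hU
    have hlip : ∀ s ∈ V, LipschitzOnWith K (F s) W := fun s hs => by
      have h := (hK.mono hVW).comp (LipschitzWith.prodMk_left s).lipschitzOnWith
        fun y hy => ⟨hs, hy⟩
      rwa [mul_one] at h
    have hstay {f : ℝ → ℝ} (hf : SolvesODE F f) (hft : f t = u t) :
        ∀ᶠ s in 𝓝 t, HasDerivAt f (F s (f s)) s ∧ f s ∈ W :=
      (Eventually.of_forall hf).and (hf.continuous.continuousAt.preimage_mem_nhds (hft ▸ hW))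
    exact ODE_solution_unique_of_eventually (eventually_of_mem hV hlip) (hstay hu rfl)
      (hstay hv ht.symm) ht
  have huniv := IsClopen.eq_univ ⟨isClosed_eq hu.continuous hv.continuous, hopen⟩ ⟨t₀, h⟩
  exact funext fun t => (huniv ▸ mem_univ t : t ∈ {t | u t = v t})

theorem lt_of_lt (hF : ContDiff ℝ 1 (uncurry F)) (hu : SolvesODE F u) (hv : SolvesODE F v)
    {t₀ : ℝ} (h : u t₀ < v t₀) (t : ℝ) : u t < v t := by
  by_contra! hle
  obtain ⟨s, -, hs⟩ := intermediate_value_uIcc (hv.continuous.sub hu.continuous).continuousOn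
    (show (0 : ℝ) ∈ uIcc (v t - u t) (v t₀ - u t₀) from
      mem_uIcc.2 (Or.inl ⟨by linarith, by linarith⟩))
  exact h.ne (congrFun (hu.eq_of_apply_eq hF hv (sub_eq_zero.1 hs).symm) t₀)

theorem strictMono_shift (hF : ContDiff ℝ 1 (uncurry F)) (hper : Periodic F 1)
    (hu : SolvesODE F u) (h : u 0 < u 1) (x : ℝ) : StrictMono fun k : ℤ => u (x + k) := by
  refine strictMono_int_of_lt_succ fun k => ?_
  have := hu.lt_of_lt hF (hu.comp_add_int hper 1) (t₀ := 0) (by simpa using h) (x + k)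
  simpa [add_assoc] using this

theorem strictAnti_shift (hF : ContDiff ℝ 1 (uncurry F)) (hper : Periodic F 1)
    (hu : SolvesODE F u) (h : u 1 < u 0) (x : ℝ) : StrictAnti fun k : ℤ => u (x + k) := by
  refine strictAnti_int_of_succ_lt fun k => ?_
  have := (hu.comp_add_int hper 1).lt_of_lt hF hu (t₀ := 0) (by simpa using h) (x + k)
  simpa [add_assoc] using this

theorem periodic_of_apply_one_eq (hF : ContDiff ℝ 1 (uncurry F)) (hper : Periodic F 1)
    (hu : SolvesODE F u) (h : u 1 = u 0) : Periodic u 1 := by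
  have := (hu.comp_add_int hper 1).eq_of_apply_eq hF hu (t₀ := 0) (by simpa using h)
  exact fun x => by simpa using congrFun this x

theorem sub_eq_integral (hF : Continuous (uncurry F)) (hu : SolvesODE F u) (a b : ℝ) :
    u b - u a = ∫ s in a..b, F s (u s) :=
  (intervalIntegral.integral_eq_sub_of_hasDerivAt (fun s _ => hu s)
    ((hu.continuous_field hF).intervalIntegrable a b)).symm

theorem solvesODE_of_tendsto_shift {l : Filter ℤ} [l.NeBot] [l.IsCountablyGenerated] {m M : ℝ}
    (hF : Continuous (uncurry F)) (hper : Periodic F 1) (hu : SolvesODE F u)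
    (hub : ∀ x, u x ∈ Icc m M) (hw : ∀ x, Tendsto (fun k : ℤ => u (x + k)) l (𝓝 (w x))) :
    SolvesODE F w := by
  obtain ⟨C, hC⟩ := exists_forall_norm_le_of_periodic hF hper (isCompact_Icc (a := m) (b := M))
  have hwb : ∀ x, w x ∈ Icc m M := fun x =>
    isClosed_Icc.mem_of_tendsto (hw x) (Eventually.of_forall fun k => hub _)
  refine solvesODE_of_sub_eq_integral hF (fun t => hC t _ (hwb t)) fun a b =>
    tendsto_nhds_unique ((hw b).sub (hw a)) ?_
  have hshift : (fun k : ℤ => u (b + k) - u (a + k)) =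
      fun k : ℤ => ∫ s in a..b, F s (u (s + k)) :=
    funext fun k => (hu.comp_add_int hper k).sub_eq_integral hF a b
  rw [hshift]
  exact intervalIntegral.tendsto_integral_filter_of_dominated_convergence (fun _ => C)
    (Eventually.of_forall fun k =>
      ((hu.comp_add_int hper k).continuous_field hF).aestronglyMeasurable)
    (Eventually.of_forall fun k => Eventually.of_forall fun s _ => hC s _ (hub _))
    intervalIntegrable_const
    (Eventually.of_forall fun s _ =>
      ((hF.comp (continuous_const.prodMk continuous_id)).tendsto _).comp (hw s))

theorem tendsto_sub_of_tendsto_shift {L : Filter ℝ} {l : Filter ℤ} {m M : ℝ}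
    (hF : ContDiff ℝ 1 (uncurry F)) (hper : Periodic F 1) (hu : SolvesODE F u)
    (hv : SolvesODE F v) (hvper : Periodic v 1) (hub : ∀ x, u x ∈ Icc m M)
    (hvb : ∀ x, v x ∈ Icc m M) (hL : Tendsto Int.floor L l)
    (hlim : Tendsto (fun k : ℤ => u k) l (𝓝 (v 0))) :
    Tendsto (fun x => u x - v x) L (𝓝 0) := by
  obtain ⟨K, hK⟩ := exists_forall_lipschitzOnWith_of_periodic hF hper m M
  have hstep : ∀ x, ‖u x - v x‖ ≤ dist (u ⌊x⌋) (v 0) * exp K := fun x => by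
    have hx : x ∈ Icc (⌊x⌋ : ℝ) (⌊x⌋ + 1) := ⟨Int.floor_le x, (Int.lt_floor_add_one x).le⟩
    have hgron := dist_le_of_trajectories_ODE_of_mem (fun t _ => hK t)
      hu.continuous.continuousOn (fun t _ => (hu t).hasDerivWithinAt) (fun t _ => hub t)
      hv.continuous.continuousOn (fun t _ => (hv t).hasDerivWithinAt) (fun t _ => hvb t)
      le_rfl x hx
    rw [← dist_eq_norm]
    calc dist (u x) (v x) ≤ dist (u ⌊x⌋) (v ⌊x⌋) * exp (K * (x - ⌊x⌋)) := hgron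
      _ ≤ dist (u ⌊x⌋) (v 0) * exp K := by
        rw [show v ⌊x⌋ = v 0 by simpa using hvper.add_int_eq 0 ⌊x⌋]
        gcongr
        exact mul_le_of_le_one_right K.coe_nonneg (by linarith [hx.2])
  refine squeeze_zero_norm hstep ?_
  simpa using ((tendsto_iff_dist_tendsto_zero.1 hlim).comp hL).mul_const (exp K)

theorem exists_tendsto_shift {m M : ℝ} (hF : ContDiff ℝ 1 (uncurry F)) (hper : Periodic F 1)
    (hu : SolvesODE F u) (hub : ∀ x, u x ∈ Icc m M) (h01 : u 0 ≠ u 1) :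
    ∃ wb wt : ℝ → ℝ, (∀ x, Tendsto (fun k : ℤ => u (x + k)) atBot (𝓝 (wb x))) ∧
      (∀ x, Tendsto (fun k : ℤ => u (x + k)) atTop (𝓝 (wt x))) ∧ wb 0 ≠ wt 0 := by
  have hbddBelow (x : ℝ) : BddBelow (range fun k : ℤ => u (x + k)) :=
    ⟨m, forall_mem_range.2 fun k => (hub _).1⟩
  have hbddAbove (x : ℝ) : BddAbove (range fun k : ℤ => u (x + k)) :=
    ⟨M, forall_mem_range.2 fun k => (hub _).2⟩
  rcases h01.lt_or_gt with h | h
  · have hmono := hu.strictMono_shift hF hper h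
    refine ⟨_, _, fun x => tendsto_atBot_ciInf (hmono x).monotone (hbddBelow x),
      fun x => tendsto_atTop_ciSup (hmono x).monotone (hbddAbove x), ne_of_lt ?_⟩
    exact (ciInf_le (hbddBelow 0) (-1)).trans_lt
      ((hmono 0 (show (-1 : ℤ) < 0 by norm_num)).trans_le (le_ciSup (hbddAbove 0) 0))
  · have hanti := hu.strictAnti_shift hF hper h
    refine ⟨_, _, fun x => tendsto_atBot_ciSup (hanti x).antitone (hbddAbove x),
      fun x => tendsto_atTop_ciInf (hanti x).antitone (hbddBelow x), ne_of_gt ?_⟩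
    exact (ciInf_le (hbddBelow 0) 1).trans_lt
      ((hanti 0 (show (0 : ℤ) < 1 by norm_num)).trans_le (le_ciSup (hbddAbove 0) 0))

end SolvesODE

section PerStat

variable {A : ℝ → ℝ → ℝ} {α : ℝ} {v : ℝ → ℝ}

theorem PerStat.periodic (hv : PerStat A α v) : Periodic v 1 :=
  hv.2.1

theorem PerStat.solvesODE (hv : PerStat A α v) : SolvesODE (fun x y => A x y - α) v := fun x => by
  simpa only [hv.2.2 x] using (hv.1.differentiable one_ne_zero x).hasDerivAt

theorem perStat_of_solvesODE (hF : Continuous (uncurry fun x y => A x y - α)) (hv : SolvesODE (fun x y => A x y - α) v)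
    (hper : Periodic v 1) : PerStat A α v := by
  have hderiv : deriv v = fun x => A x (v x) - α := funext fun x => (hv x).deriv
  refine ⟨contDiff_one_iff_deriv.2 ⟨fun x => (hv x).differentiableAt, ?_⟩, hper,
    fun x => (hv x).deriv⟩
  rw [hderiv]
  exact (hv.continuous_field hF :)

end PerStat

theorem eq_or_eq_and_tendsto_sub_of_oleinik {A : ℝ → ℝ → ℝ} {α m M : ℝ} {vm vp u w : ℝ → ℝ}
    {l : Filter ℤ} [l.NeBot] [l.IsCountablyGenerated] {L : Filter ℝ}
    (hF : ContDiff ℝ 1 (uncurry fun x y => A x y - α)) (hFper : Periodic (fun x y => A x y - α) 1)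
    (hvm : PerStat A α vm) (hvp : PerStat A α vp)
    (holeinik : ∀ w : ℝ → ℝ, PerStat A α w →
      (∀ x, vm x ≤ w x ∧ w x ≤ vp x) → w = vm ∨ w = vp)
    (hu : SolvesODE (fun x y => A x y - α) u) (htrap : ∀ x, vm x < u x ∧ u x < vp x)
    (hub : ∀ x, u x ∈ Icc m M) (hl : Tendsto (· + 1) l l) (hL : Tendsto Int.floor L l)
    (hw : ∀ x, Tendsto (fun k : ℤ => u (x + k)) l (𝓝 (w x))) :
    (w = vm ∨ w = vp) ∧ Tendsto (fun x => u x - w x) L (𝓝 0) := by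
  have hwsol := hu.solvesODE_of_tendsto_shift hF.continuous hFper hub hw
  have hwper := periodic_of_tendsto_shift hl hw
  have hwb (x : ℝ) : w x ∈ Icc m M :=
    isClosed_Icc.mem_of_tendsto (hw x) (Eventually.of_forall fun k => hub _)
  have hbetween (x : ℝ) : vm x ≤ w x ∧ w x ≤ vp x :=
    ⟨ge_of_tendsto' (hw x) fun k => hvm.periodic.add_int_eq x k ▸ (htrap _).1.le,
      le_of_tendsto' (hw x) fun k => hvp.periodic.add_int_eq x k ▸ (htrap _).2.le⟩
  exact ⟨holeinik w (perStat_of_solvesODE hF.continuous hwsol hwper) hbetween,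
    hu.tendsto_sub_of_tendsto_shift hF hFper hwsol hwper hub hwb hL (by simpa using hw 0)⟩

theorem shock_ode_asymptotic_states_oleinik_general
    (A : ℝ → ℝ → ℝ)
    (hA : ContDiff ℝ 1 (Function.uncurry A))
    (hper : ∀ y v, A (y + 1) v = A y v)
    (α : ℝ) (vm vp : ℝ → ℝ)
    (hvm : PerStat A α vm) (hvp : PerStat A α vp)
    (holeinik : ∀ w : ℝ → ℝ, PerStat A α w →
      (∀ x, vm x ≤ w x ∧ w x ≤ vp x) → w = vm ∨ w = vp)
    (u₀ : ℝ) (h₀l : vm 0 < u₀) (h₀r : u₀ < vp 0)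
    (u : ℝ → ℝ)
    (hu : ∀ x, HasDerivAt u (A x (u x) - α) x)
    (hu0 : u 0 = u₀) :
    (Tendsto (fun x => u x - vm x) atBot (𝓝 0) ∧
      Tendsto (fun x => u x - vp x) atTop (𝓝 0)) ∨
    (Tendsto (fun x => u x - vp x) atBot (𝓝 0) ∧
      Tendsto (fun x => u x - vm x) atTop (𝓝 0)) := by
  subst hu0
  have hsol : SolvesODE (fun x y => A x y - α) u := hu
  have hF : ContDiff ℝ 1 (uncurry fun x y => A x y - α) := hA.sub contDiff_const
  have hFper : Periodic (fun x y => A x y - α) 1 := fun x => funext fun y => by simp only [hper]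
  have htrap (x : ℝ) : vm x < u x ∧ u x < vp x :=
    ⟨hvm.solvesODE.lt_of_lt hF hsol h₀l x, hsol.lt_of_lt hF hvp.solvesODE h₀r x⟩
  obtain ⟨m, hm⟩ := (hvm.periodic.compact_of_continuous one_ne_zero hvm.1.continuous).bddBelow
  obtain ⟨M, hM⟩ := (hvp.periodic.compact_of_continuous one_ne_zero hvp.1.continuous).bddAbove
  have hub (x : ℝ) : u x ∈ Icc m M :=
    ⟨(hm (mem_range_self x)).trans (htrap x).1.le, (htrap x).2.le.trans (hM (mem_range_self x))⟩
  have h01 : u 0 ≠ u 1 := fun h => by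
    have huper := perStat_of_solvesODE hF.continuous hsol
      (hsol.periodic_of_apply_one_eq hF hFper h.symm)
    rcases holeinik u huper fun x => ⟨(htrap x).1.le, (htrap x).2.le⟩ with rfl | rfl
    exacts [lt_irrefl _ (htrap 0).1, lt_irrefl _ (htrap 0).2]
  obtain ⟨wb, wt, hwb, hwt, hne⟩ := hsol.exists_tendsto_shift hF hFper hub h01
  obtain ⟨hb, hbconv⟩ := eq_or_eq_and_tendsto_sub_of_oleinik hF hFper hvm hvp holeinik hsol htrap
    hub (tendsto_atBot_add_const_right _ 1 tendsto_id) tendsto_floor_atBot hwb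
  obtain ⟨ht, htconv⟩ := eq_or_eq_and_tendsto_sub_of_oleinik hF hFper hvm hvp holeinik hsol htrap
    hub (tendsto_atTop_add_const_right _ 1 tendsto_id) tendsto_floor_atTop hwt
  rcases hb with rfl | rfl <;> rcases ht with rfl | rfl
  exacts [absurd rfl hne, Or.inl ⟨hbconv, htconv⟩, Or.inr ⟨hbconv, htconv⟩, absurd rfl hne]

/-- under the Oleinik condition, the global solution of
`u' = A(x,u) - α`, `u(0) = u₀` connects `v₋` to `v₊`, in one direction or
the other. -/
theorem shock_ode_asymptotic_states_oleinik
    (A : ℝ → ℝ → ℝ)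
    (hA : ContDiff ℝ 1 (Function.uncurry A))
    (hper : ∀ y v, A (y + 1) v = A y v)
    (α : ℝ) (vm vp : ℝ → ℝ)
    (hvm : PerStat A α vm) (hvp : PerStat A α vp)
    (hlt : ∀ x, vm x < vp x)
    (holeinik : ∀ w : ℝ → ℝ, PerStat A α w →
      (∀ x, vm x ≤ w x ∧ w x ≤ vp x) → w = vm ∨ w = vp)
    (u₀ : ℝ) (h₀l : vm 0 < u₀) (h₀r : u₀ < vp 0)
    (u : ℝ → ℝ)
    (hu : ∀ x, HasDerivAt u (A x (u x) - α) x)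
    (hu0 : u 0 = u₀) :
    (Tendsto (fun x => u x - vm x) atBot (𝓝 0) ∧
      Tendsto (fun x => u x - vp x) atTop (𝓝 0)) ∨
    (Tendsto (fun x => u x - vp x) atBot (𝓝 0) ∧
      Tendsto (fun x => u x - vm x) atTop (𝓝 0)) :=
  shock_ode_asymptotic_states_oleinik_general A hA hper α vm vp hvm hvp holeinik u₀ h₀l h₀r u hu hu0
end

section
/- Let α ∈ ℝ, let v_-, v_+ be periodic stationary solutions with constant α such that v_-(x) < v_+(x) for all x, and let (v_l, v_r) be either (v_-, v_+) or (v_+, v_-). Let U and V be two shock profiles, each connecting v_l to v_r. Then U − V is integrable on ℝ, i.e. U − V ∈ L¹(ℝ). -/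
open MeasureTheory Filter Set Topology

/-- A shock profile connecting `vl` to `vr`, with constant `α`. -/
def ShockProfile (A : ℝ → ℝ → ℝ) (α : ℝ) (vl vr U : ℝ → ℝ) : Prop :=
  ContDiff ℝ 1 U ∧ (∀ x, deriv U x = A x (U x) - α) ∧
  Filter.Tendsto (fun x => U x - vl x) Filter.atBot (nhds 0) ∧
  Filter.Tendsto (fun x => U x - vr x) Filter.atTop (nhds 0)

/-! Solutions of the scalar ODE `u' = A(x, u) - α` are unique, so two of them never cross and are
therefore strictly ordered or equal. A shock profile comes arbitrarily close to `vm(0)` and to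
`vp(0)` at integer points, hence lies strictly between `vm` and `vp`; and since `A` is 1-periodic,
the integer shifts `U(· + n)` are again solutions, so suitable ones bracket `V`. Thus `U - V` is
squeezed between `U - U(· + n)` and `U - U(· + m)`. Each of these has constant sign, and its
integral over `[a, b]` telescopes to `∫_a^{a+n} U - ∫_b^{b+n} U`, which is bounded since `U` is. -/

open Function

section ODE

variable {E : Type*} [NormedAddCommGroup E] [NormedSpace ℝ E] {F : ℝ → E → E} {f g : ℝ → E}

theorem exists_lipschitzOnWith_ball_of_contDiffAt_uncurry {t₀ : ℝ} {y₀ : E}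
    (hF : ContDiffAt ℝ 1 (uncurry F) (t₀, y₀)) :
    ∃ K ε, 0 < ε ∧ ∀ t ∈ Metric.ball t₀ ε, LipschitzOnWith K (F t) (Metric.ball y₀ ε) := by
  obtain ⟨K, N, hN, hK⟩ := hF.exists_lipschitzOnWith
  obtain ⟨ε, hε, hball⟩ := Metric.mem_nhds_iff.mp hN
  refine ⟨K, ε, hε, fun t ht => ?_⟩
  have hKt := (hK.mono hball).comp (LipschitzWith.prodMk_left t).lipschitzOnWith
    fun y hy => ball_prod_same t₀ y₀ ε ▸ mk_mem_prod ht hy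
  rwa [mul_one] at hKt

theorem ODE_solution_eventuallyEq_of_contDiffAt {t₀ : ℝ}
    (hF : ContDiffAt ℝ 1 (uncurry F) (t₀, f t₀))
    (hf : ∀ t, HasDerivAt f (F t (f t)) t) (hg : ∀ t, HasDerivAt g (F t (g t)) t)
    (heq : f t₀ = g t₀) : f =ᶠ[𝓝 t₀] g := by
  obtain ⟨K, ε, hε, hK⟩ := exists_lipschitzOnWith_ball_of_contDiffAt_uncurry hF
  have near : ∀ {h : ℝ → E}, (∀ t, HasDerivAt h (F t (h t)) t) → h t₀ = f t₀ →
      ∀ᶠ t in 𝓝 t₀, HasDerivAt h (F t (h t)) t ∧ h t ∈ Metric.ball (f t₀) ε := fun hh h₀ =>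
    (Eventually.of_forall hh).and <|
      h₀ ▸ (hh t₀).continuousAt.eventually (Metric.ball_mem_nhds _ hε)
  exact ODE_solution_unique_of_eventually (eventually_of_mem (Metric.ball_mem_nhds t₀ hε) hK)
    (near hf rfl) (near hg heq.symm) heq

theorem ODE_solution_unique_of_contDiff (hF : ContDiff ℝ 1 (uncurry F))
    (hf : ∀ t, HasDerivAt f (F t (f t)) t) (hg : ∀ t, HasDerivAt g (F t (g t)) t)
    {t₀ : ℝ} (heq : f t₀ = g t₀) : f = g := by
  have hopen : IsOpen {t | f t = g t} := isOpen_iff_mem_nhds.mpr fun t ht =>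
    ODE_solution_eventuallyEq_of_contDiffAt hF.contDiffAt hf hg ht
  have hclosed : IsClosed {t | f t = g t} :=
    isClosed_eq (continuous_iff_continuousAt.mpr fun t => (hf t).continuousAt)
      (continuous_iff_continuousAt.mpr fun t => (hg t).continuousAt)
  funext t
  exact (IsClopen.eq_univ ⟨hclosed, hopen⟩ ⟨t₀, heq⟩ ▸ mem_univ t :)

theorem ODE_solution_comp_add_right {F : ℝ → E → E} {f : ℝ → E}
    (hf : ∀ t, HasDerivAt f (F t (f t)) t) {c : ℝ} (hc : ∀ t y, F (t + c) y = F t y) (t : ℝ) :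
    HasDerivAt (fun t => f (t + c)) (F t (f (t + c))) t := by
  simpa [hc] using (hf (t + c)).comp_add_const t c

end ODE

section ScalarODE

variable {F : ℝ → ℝ → ℝ} {f g : ℝ → ℝ}

theorem ODE_solution_lt_of_lt (hF : ContDiff ℝ 1 (uncurry F))
    (hf : ∀ t, HasDerivAt f (F t (f t)) t) (hg : ∀ t, HasDerivAt g (F t (g t)) t)
    {t₀ : ℝ} (hlt : f t₀ < g t₀) (t : ℝ) : f t < g t := by
  by_contra! hle
  have hcont : Continuous fun s => g s - f s :=
    (Differentiable.continuous fun s => (hg s).differentiableAt).sub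
      (Differentiable.continuous fun s => (hf s).differentiableAt)
  obtain ⟨c, -, hc⟩ := intermediate_value_uIcc hcont.continuousOn
    (mem_uIcc.mpr (Or.inr ⟨sub_nonpos.mpr hle, (sub_pos.mpr hlt).le⟩))
  exact hlt.ne (congrFun (ODE_solution_unique_of_contDiff hF hf hg (sub_eq_zero.mp hc).symm) t₀)

theorem ODE_solution_le_or_le (hF : ContDiff ℝ 1 (uncurry F))
    (hf : ∀ t, HasDerivAt f (F t (f t)) t) (hg : ∀ t, HasDerivAt g (F t (g t)) t) :
    f ≤ g ∨ g ≤ f := by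
  rcases lt_trichotomy (f 0) (g 0) with h | h | h
  · exact Or.inl fun t => (ODE_solution_lt_of_lt hF hf hg h t).le
  · exact Or.inl (ODE_solution_unique_of_contDiff hF hf hg h).le
  · exact Or.inr fun t => (ODE_solution_lt_of_lt hF hg hf h t).le

end ScalarODE

theorem abs_intervalIntegral_sub_comp_add_right_le {f : ℝ → ℝ} (hf : Continuous f) {M : ℝ}
    (hM : ∀ x, |f x| ≤ M) (c a b : ℝ) :
    |∫ x in a..b, (f x - f (x + c))| ≤ 2 * M * |c| := by
  have hi : ∀ p q : ℝ, IntervalIntegrable f volume p q := hf.intervalIntegrable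
  have hbound : ∀ p, |∫ x in p..p + c, f x| ≤ M * |c| := fun p => by
    have h := intervalIntegral.norm_integral_le_of_norm_le_const (a := p) (b := p + c) (f := f)
      fun x _ => (Real.norm_eq_abs (f x)).symm ▸ hM x
    rwa [Real.norm_eq_abs, add_sub_cancel_left] at h
  have hfc : Continuous fun x => f (x + c) := hf.comp (continuous_add_const c)
  rw [intervalIntegral.integral_sub (hi a b) (hfc.intervalIntegrable a b),
    intervalIntegral.integral_comp_add_right,
    intervalIntegral.integral_interval_sub_interval_comm (hi _ _) (hi _ _) (hi _ _)]
  calc _ ≤ |∫ x in a..a + c, f x| + |∫ x in b..b + c, f x| := abs_sub _ _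
    _ ≤ 2 * M * |c| := by linarith [hbound a, hbound b]

theorem integrable_sub_comp_add_right_of_nonneg {f : ℝ → ℝ} (hf : Continuous f) {M : ℝ}
    (hM : ∀ x, |f x| ≤ M) {c : ℝ} (hnn : ∀ x, 0 ≤ f x - f (x + c)) :
    Integrable fun x => f x - f (x + c) := by
  refine integrable_of_intervalIntegral_norm_bounded (2 * M * |c|) (l := atTop) (a := Neg.neg)
    (b := id) (fun _ => (hf.sub (hf.comp (continuous_add_const c))).integrableOn_Ioc)
    tendsto_neg_atTop_atBot tendsto_id (.of_forall fun r => ?_)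
  simp_rw [Real.norm_eq_abs, abs_of_nonneg (hnn _)]
  exact (le_abs_self _).trans (abs_intervalIntegral_sub_comp_add_right_le hf hM c _ _)

theorem integrable_sub_comp_add_right_of_le_or_le {f : ℝ → ℝ} (hf : Continuous f) {M : ℝ}
    (hM : ∀ x, |f x| ≤ M) {c : ℝ} (h : (fun x => f (x + c)) ≤ f ∨ f ≤ fun x => f (x + c)) :
    Integrable fun x => f x - f (x + c) := by
  rcases h with h | h
  · exact integrable_sub_comp_add_right_of_nonneg hf hM fun x => sub_nonneg.mpr (h x)
  · refine (integrable_sub_comp_add_right_of_nonneg hf.neg (f := -f) (by simpa using hM)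
      fun x => by simpa using h x).neg.congr (.of_forall fun x => ?_)
    simp only [Pi.neg_apply]
    ring

theorem ODE_solution_integrable_sub_comp_add_right {F : ℝ → ℝ → ℝ} {f : ℝ → ℝ}
    (hF : ContDiff ℝ 1 (uncurry F)) (hf : ∀ t, HasDerivAt f (F t (f t)) t) {M : ℝ}
    (hM : ∀ t, |f t| ≤ M) {c : ℝ} (hc : ∀ t y, F (t + c) y = F t y) :
    Integrable fun t => f t - f (t + c) :=
  integrable_sub_comp_add_right_of_le_or_le
    (Differentiable.continuous fun t => (hf t).differentiableAt) hM
    (ODE_solution_le_or_le hF (ODE_solution_comp_add_right hf hc) hf)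

theorem Function.Periodic.intCast_eq {v : ℝ → ℝ} (hv : Periodic v 1) (n : ℤ) : v n = v 0 := by
  simpa using hv.int_mul_eq n

theorem Function.Periodic.exists_int_abs_sub_lt_of_tendsto {v W : ℝ → ℝ} (hv : Periodic v 1)
    {l : Filter ℝ} (hl : l = atBot ∨ l = atTop) (hW : Tendsto (fun x => W x - v x) l (𝓝 0))
    {ε : ℝ} (hε : 0 < ε) : ∃ n : ℤ, |W n - v 0| < ε := by
  have hev : ∀ᶠ x in l, |W x - v x| < ε := by
    simpa using hW.eventually (Metric.ball_mem_nhds 0 hε)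
  obtain ⟨n, hn⟩ : ∃ n : ℤ, |W n - v n| < ε := by
    rcases hl with rfl | rfl
    · exact hev.intCast_atBot.exists
    · exact hev.intCast_atTop.exists
  exact ⟨n, hv.intCast_eq n ▸ hn⟩

theorem ShockProfile.hasDerivAt {A : ℝ → ℝ → ℝ} {α : ℝ} {vl vr U : ℝ → ℝ}
    (hU : ShockProfile A α vl vr U) (x : ℝ) : HasDerivAt U (A x (U x) - α) x :=
  hU.2.1 x ▸ (hU.1.differentiable one_ne_zero x).hasDerivAt

theorem PerStat.hasDerivAt {A : ℝ → ℝ → ℝ} {α : ℝ} {v : ℝ → ℝ} (hv : PerStat A α v) (x : ℝ) :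
    HasDerivAt v (A x (v x) - α) x :=
  hv.2.2 x ▸ (hv.1.differentiable one_ne_zero x).hasDerivAt

theorem ShockProfile.exists_int_abs_sub_lt {A : ℝ → ℝ → ℝ} {α : ℝ} {vl vr U v : ℝ → ℝ}
    (hU : ShockProfile A α vl vr U) (hv : Periodic v 1) (hend : v = vl ∨ v = vr) {ε : ℝ}
    (hε : 0 < ε) : ∃ n : ℤ, |U n - v 0| < ε := by
  rcases hend with rfl | rfl
  · exact hv.exists_int_abs_sub_lt_of_tendsto (Or.inl rfl) hU.2.2.1 hε
  · exact hv.exists_int_abs_sub_lt_of_tendsto (Or.inr rfl) hU.2.2.2 hε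

theorem ShockProfile.lt_and_lt_of_perStat {A : ℝ → ℝ → ℝ} {α : ℝ} {vl vr W vm vp : ℝ → ℝ}
    (hA : ContDiff ℝ 1 (uncurry A)) (hvm : PerStat A α vm) (hvp : PerStat A α vp)
    (hlt : vm 0 < vp 0) (hvm_end : vm = vl ∨ vm = vr) (hvp_end : vp = vl ∨ vp = vr)
    (hW : ShockProfile A α vl vr W) (x : ℝ) : vm x < W x ∧ W x < vp x := by
  have hF : ContDiff ℝ 1 (uncurry fun x u => A x u - α) := hA.sub contDiff_const
  obtain ⟨n, hn⟩ := hW.exists_int_abs_sub_lt hvp.2.1 hvp_end (sub_pos.mpr hlt)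
  obtain ⟨k, hk⟩ := hW.exists_int_abs_sub_lt hvm.2.1 hvm_end (sub_pos.mpr hlt)
  rw [abs_lt] at hn hk
  constructor
  · refine ODE_solution_lt_of_lt hF hvm.hasDerivAt hW.hasDerivAt (t₀ := n) ?_ x
    linarith [Periodic.intCast_eq hvm.2.1 n]
  · refine ODE_solution_lt_of_lt hF hW.hasDerivAt hvp.hasDerivAt (t₀ := k) ?_ x
    linarith [Periodic.intCast_eq hvp.2.1 k]

/-- the difference of two shock profiles with the same asymptotic
states is integrable. -/
theorem shock_profile_difference_integrable
    (A : ℝ → ℝ → ℝ)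
    (hA : ContDiff ℝ 1 (Function.uncurry A))
    (hper : ∀ y v, A (y + 1) v = A y v)
    (α : ℝ) (vm vp : ℝ → ℝ)
    (hvm : PerStat A α vm) (hvp : PerStat A α vp)
    (hlt : ∀ x, vm x < vp x)
    (vl vr : ℝ → ℝ)
    (hlr : (vl = vm ∧ vr = vp) ∨ (vl = vp ∧ vr = vm))
    (U V : ℝ → ℝ)
    (hU : ShockProfile A α vl vr U) (hV : ShockProfile A α vl vr V) :
    Integrable (fun x => U x - V x) := by
  have hF : ContDiff ℝ 1 (uncurry fun x u => A x u - α) := hA.sub contDiff_const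
  have hFn (n : ℤ) (x u : ℝ) : A (x + n) u - α = A x u - α := by
    have hAu : Periodic (fun y => A y u) 1 := fun y => hper y u
    simpa using congrArg (· - α) (hAu.int_mul n x)
  have hvm_end : vm = vl ∨ vm = vr := by rcases hlr with ⟨rfl, rfl⟩ | ⟨rfl, rfl⟩ <;> simp
  have hvp_end : vp = vl ∨ vp = vr := by rcases hlr with ⟨rfl, rfl⟩ | ⟨rfl, rfl⟩ <;> simp
  have between {W : ℝ → ℝ} (hW : ShockProfile A α vl vr W) :=
    hW.lt_and_lt_of_perStat hA hvm hvp (hlt 0) hvm_end hvp_end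
  obtain ⟨a, ha⟩ := (Periodic.compact_of_continuous hvm.2.1 one_ne_zero hvm.1.continuous).bddBelow
  obtain ⟨b, hb⟩ := (Periodic.compact_of_continuous hvp.2.1 one_ne_zero hvp.1.continuous).bddAbove
  have hUM (x : ℝ) : |U x| ≤ max |a| |b| := abs_le_max_abs_abs
    ((ha ⟨x, rfl⟩).trans (between hU x).1.le) ((between hU x).2.le.trans (hb ⟨x, rfl⟩))
  obtain ⟨n, hn⟩ := hU.exists_int_abs_sub_lt hvp.2.1 hvp_end (sub_pos.mpr (between hV 0).2)
  obtain ⟨m, hm⟩ := hU.exists_int_abs_sub_lt hvm.2.1 hvm_end (sub_pos.mpr (between hV 0).1)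
  rw [abs_lt] at hn hm
  have hUshift (k : ℤ) (t : ℝ) : HasDerivAt (fun x => U (x + k)) (A t (U (t + k)) - α) t :=
    ODE_solution_comp_add_right (F := fun x u => A x u - α) hU.hasDerivAt (hFn k) t
  have hUn (x : ℝ) : V x < U (x + n) :=
    ODE_solution_lt_of_lt hF hV.hasDerivAt (hUshift n) (t₀ := 0) (by simpa using hn.1) x
  have hUm (x : ℝ) : U (x + m) < V x :=
    ODE_solution_lt_of_lt hF (hUshift m) hV.hasDerivAt (t₀ := 0) (by simpa using hm.2) x
  refine integrable_of_le_of_le (hU.1.continuous.sub hV.1.continuous).aestronglyMeasurable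
    (.of_forall fun x => ?_) (.of_forall fun x => ?_)
    (ODE_solution_integrable_sub_comp_add_right hF hU.hasDerivAt hUM (hFn n))
    (ODE_solution_integrable_sub_comp_add_right hF hU.hasDerivAt hUM (hFn m))
  · linarith [hUn x]
  · linarith [hUm x]
end
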